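/- Let (C, τ^C) be a compact Hausdorff space and (Θ, τ^Θ) a Hausdorff space (not necessarily compact), U : Θ × C → ℝ jointly continuous, V : Θ × C → ℝ jointly upper semicontinuous and uniformly bounded, u̲ : Θ → ℝ, and suppose there exists c* ∈ C with U(θ, c*) ≥ u̲(θ) for all θ ∈ Θ. Let 𝕂 be a nonempty set of regular Borel probability measures on Θ and α : 𝕂 → ℝ. Then there exists D* ∈ T attaining the supremum sup_{D ∈ T} inf_{κ ∈ 𝕂} { ∫_Θ V*(θ, D) dκ(θ) + α(κ) }, where T := {D ∈ CL(C) : sup_{d ∈ D} U(θ, d) ≥ u̲(θ) for all θ ∈ Θ} and V*(θ, D) := sup_{d ∈ Φ(θ, D)} V(θ, d) with Φ(θ, D) := argmax_{d ∈ D} U(θ, d). -/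

import Mathlib

/-- The hyperspace of nonempty closed subsets of a topological space. -/
def CL (C : Type*) [TopologicalSpace C] : Type _ :=
  {A : Set C // A.Nonempty ∧ IsClosed A}

/-- The subbase for the Fell topology: all sets
`V⁻ = {A : A ∩ V ≠ ∅}` and `W⁺ = {A : A ⊆ W}` for `V`, `W` nonempty open. -/
def fellSubbasis (C : Type*) [TopologicalSpace C] : Set (Set (CL C)) :=
  {s | (∃ V : Set C, IsOpen V ∧ V.Nonempty ∧ s = {A : CL C | (A.1 ∩ V).Nonempty}) ∨
       (∃ W : Set C, IsOpen W ∧ W.Nonempty ∧ s = {A : CL C | A.1 ⊆ W})}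

/-- The Fell topology on the hyperspace of nonempty closed subsets. -/
instance fellTopology (C : Type*) [TopologicalSpace C] : TopologicalSpace (CL C) :=
  TopologicalSpace.generateFrom (fellSubbasis C)

/-- The agent's indirect utility over menus: `U*(θ, D) = sup_{d ∈ D} U(θ, d)`. -/
noncomputable def Ustar {Θ C : Type*} [TopologicalSpace C]
    (U : Θ × C → ℝ) (θ : Θ) (D : CL C) : ℝ :=
  sSup ((fun d => U (θ, d)) '' D.1)


/-- The agent's argmax correspondence:
`Φ(θ, D) = {d ∈ D : U(θ, d) = sup_{d' ∈ D} U(θ, d')}`. -/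
noncomputable def Phi {Θ C : Type*} [TopologicalSpace C]
    (U : Θ × C → ℝ) (θ : Θ) (D : CL C) : Set C :=
  {d ∈ D.1 | U (θ, d) = Ustar U θ D}

/-- The principal's indirect utility over menus:
`V*(θ, D) = sup_{d ∈ Φ(θ, D)} V(θ, d)`. -/
noncomputable def Vstar {Θ C : Type*} [TopologicalSpace C]
    (U V : Θ × C → ℝ) (θ : Θ) (D : CL C) : ℝ :=
  sSup ((fun d => V (θ, d)) '' Phi U θ D)

/-- The set of individually rational menus:
`T = {D ∈ CL(C) : sup_{d ∈ D} U(θ, d) ≥ u̲(θ) for all θ}`. -/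
noncomputable def menusIR {Θ C : Type*} [TopologicalSpace C]
    (U : Θ × C → ℝ) (ulow : Θ → ℝ) : Set (CL C) :=
  {D : CL C | ∀ θ : Θ, ulow θ ≤ Ustar U θ D}

/-! Nonempty closed subsets of `C` are compact and the Fell topology is coarser than the Vietoris
topology on nonempty compact sets, so `CL C` is compact, and `T` is closed in it because
`D ↦ U*(θ, D)` is upper semicontinuous. The argmax correspondence `Φ` has closed graph (`U*` is
jointly lower semicontinuous), so by the upper half of Berge's maximum theorem `V*` is jointly
upper semicontinuous. Integrating a bounded upper semicontinuous function against a regular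
finite measure keeps it upper semicontinuous in the parameter: up to an error `Δ`, the integral
is a finite sum of measures of closed superlevel sets, and the measure of a section of a closed
set is upper semicontinuous (tube lemma on a compact set of almost full measure, inside an open
set of almost the same measure). An infimum of upper semicontinuous functions is upper
semicontinuous, hence attains its maximum on the compact set `T`. -/

open Filter Topology Set MeasureTheory

section MaximumTheorem

variable {X C : Type*} [TopologicalSpace X] [TopologicalSpace C] [CompactSpace C]

theorem IsClosed.upperSemicontinuous_sSup_image {G : Set (X × C)} (hG : IsClosed G)
    (hne : ∀ x, {c | (x, c) ∈ G}.Nonempty) {f : X × C → ℝ} (hf : UpperSemicontinuous f) :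
    UpperSemicontinuous fun x => sSup ((fun c => f (x, c)) '' {c | (x, c) ∈ G}) := by
  intro x₀ y hy
  obtain ⟨y', hy₀, hy'⟩ := exists_between hy
  have hbdd : BddAbove ((fun c => f (x₀, c)) '' {c | (x₀, c) ∈ G}) :=
    ((hf.comp (Continuous.prodMk_right x₀)).upperSemicontinuousOn _).bddAbove_of_isCompact
      (hG.preimage (Continuous.prodMk_right x₀)).isCompact
  have hproj : IsClosed (Prod.fst '' (G ∩ f ⁻¹' Ici y')) :=
    isClosedMap_fst_of_compactSpace _ (hG.inter (hf.isClosed_preimage y'))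
  have hx₀ : x₀ ∉ Prod.fst '' (G ∩ f ⁻¹' Ici y') := by
    rintro ⟨⟨x, c⟩, ⟨hc, hyc⟩, rfl⟩
    exact (hy₀.trans_le hyc).not_ge (le_csSup hbdd ⟨c, hc, rfl⟩)
  filter_upwards [hproj.isOpen_compl.mem_nhds hx₀] with x hx
  refine (csSup_le ((hne x).image _) ?_).trans_lt hy'
  rintro _ ⟨c, hc, rfl⟩
  exact le_of_not_ge fun h => hx ⟨(x, c), ⟨hc, h⟩, rfl⟩

end MaximumTheorem

namespace CL

variable {C : Type*} [TopologicalSpace C]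

theorem isOpen_setOf_inter_nonempty {V : Set C} (hV : IsOpen V) :
    IsOpen {A : CL C | (A.1 ∩ V).Nonempty} := by
  rcases V.eq_empty_or_nonempty with rfl | hne
  · simp
  · exact TopologicalSpace.isOpen_generateFrom_of_mem (Or.inl ⟨V, hV, hne, rfl⟩)

theorem isOpen_setOf_subset {W : Set C} (hW : IsOpen W) : IsOpen {A : CL C | A.1 ⊆ W} := by
  rcases W.eq_empty_or_nonempty with rfl | hne
  · simp only [subset_empty_iff]
    convert isOpen_empty
    exact eq_empty_of_forall_notMem fun A hA => A.2.1.ne_empty hA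
  · exact TopologicalSpace.isOpen_generateFrom_of_mem (Or.inr ⟨W, hW, hne, rfl⟩)

theorem isCompact [CompactSpace C] (A : CL C) : IsCompact A.1 := A.2.2.isCompact

theorem isClosed_setOf_mem [CompactSpace C] [T2Space C] :
    IsClosed {p : CL C × C | p.2 ∈ p.1.1} := by
  refine isOpen_compl_iff.1 (isOpen_iff_forall_mem_open.2 ?_)
  rintro ⟨A, x⟩ hx
  obtain ⟨W, V, hW, hV, hAW, hxV, hWV⟩ := A.isCompact.separation_of_notMem hx
  exact ⟨{B : CL C | B.1 ⊆ W} ×ˢ V, fun p hp hmem => disjoint_left.1 hWV (hp.1 hmem) hp.2,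
    (isOpen_setOf_subset hW).prod hV, hAW, hxV⟩

def ofNonemptyCompacts [T2Space C] (K : TopologicalSpace.NonemptyCompacts C) : CL C :=
  ⟨K, K.nonempty, K.isCompact.isClosed⟩

theorem continuous_ofNonemptyCompacts [T2Space C] : Continuous (ofNonemptyCompacts (C := C)) :=
  continuous_generateFrom_iff.2 <| by
    rintro s (⟨V, hV, -, rfl⟩ | ⟨W, hW, -, rfl⟩)
    exacts [TopologicalSpace.NonemptyCompacts.isOpen_inter_nonempty_of_isOpen hV,
      TopologicalSpace.NonemptyCompacts.isOpen_subsets_of_isOpen hW]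

instance compactSpace [CompactSpace C] [T2Space C] : CompactSpace (CL C) :=
  Function.Surjective.compactSpace continuous_ofNonemptyCompacts
    fun A => ⟨⟨⟨A.1, A.isCompact⟩, A.2.1⟩, rfl⟩

end CL

section Menus

variable {Θ C : Type*} [TopologicalSpace Θ] [TopologicalSpace C] [CompactSpace C]
  {U V : Θ × C → ℝ}

theorem le_Ustar (hU : Continuous U) {θ : Θ} {D : CL C} {d : C} (hd : d ∈ D.1) :
    U (θ, d) ≤ Ustar U θ D :=
  le_csSup (D.isCompact.image (hU.comp (Continuous.prodMk_right θ))).bddAbove ⟨d, hd, rfl⟩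

theorem Phi_nonempty (hU : Continuous U) (θ : Θ) (D : CL C) : (Phi U θ D).Nonempty := by
  obtain ⟨d, hd, hmax⟩ := (D.isCompact.image (hU.comp (Continuous.prodMk_right θ))).sSup_mem
    (D.2.1.image _)
  exact ⟨d, hd, hmax⟩

theorem abs_Vstar_le (hU : Continuous U) {M : ℝ} (hM : ∀ p, |V p| ≤ M) (θ : Θ) (D : CL C) :
    |Vstar U V θ D| ≤ M := by
  obtain ⟨d, hd⟩ := Phi_nonempty hU θ D
  have hle : ∀ v ∈ (fun d => V (θ, d)) '' Phi U θ D, v ≤ M := by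
    rintro _ ⟨e, -, rfl⟩
    exact (abs_le.1 (hM _)).2
  exact abs_le.2 ⟨(abs_le.1 (hM (θ, d))).1.trans (le_csSup ⟨M, hle⟩ ⟨d, hd, rfl⟩),
    csSup_le ⟨_, d, hd, rfl⟩ hle⟩

theorem lowerSemicontinuous_Ustar (hU : Continuous U) :
    LowerSemicontinuous fun p : Θ × CL C => Ustar U p.1 p.2 := by
  rintro ⟨θ₀, D₀⟩ y hy
  obtain ⟨_, ⟨d, hd, rfl⟩, hyd⟩ := exists_lt_of_lt_csSup (D₀.2.1.image _) hy
  obtain ⟨u, v, hu, hθ₀u, hv, hdv, huv⟩ :=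
    mem_nhds_prod_iff'.1 ((isOpen_lt continuous_const hU).mem_nhds hyd)
  filter_upwards [prod_mem_nhds (hu.mem_nhds hθ₀u)
    ((CL.isOpen_setOf_inter_nonempty hv).mem_nhds ⟨d, hd, hdv⟩)]
    with ⟨θ, D⟩ ⟨hθ, e, he, hev⟩
  exact (huv ⟨hθ, hev⟩).trans_le (le_Ustar hU he)

variable [T2Space C]

theorem upperSemicontinuous_Ustar (hU : Continuous U) (θ : Θ) :
    UpperSemicontinuous (Ustar U θ : CL C → ℝ) :=
  CL.isClosed_setOf_mem.upperSemicontinuous_sSup_image (fun D => D.2.1)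
    (f := fun p => U (θ, p.2))
    (hU.comp (continuous_const.prodMk continuous_snd)).upperSemicontinuous

theorem isClosed_menusIR (hU : Continuous U) (ulow : Θ → ℝ) :
    IsClosed (menusIR U ulow : Set (CL C)) := by
  rw [menusIR, ofPred_forall]
  exact isClosed_iInter fun θ => (upperSemicontinuous_Ustar hU θ).isClosed_preimage (ulow θ)

theorem isClosed_setOf_mem_Phi (hU : Continuous U) :
    IsClosed {q : (Θ × CL C) × C | q.2 ∈ Phi U q.1.1 q.1.2} := by
  have hPhi : {q : (Θ × CL C) × C | q.2 ∈ Phi U q.1.1 q.1.2} =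
      {q | q.2 ∈ q.1.2.1} ∩ (fun q => Ustar U q.1.1 q.1.2 - U (q.1.1, q.2)) ⁻¹' Iic 0 := by
    ext ⟨⟨θ, D⟩, d⟩
    simp only [Phi, mem_ofPred_eq, mem_inter_iff, mem_preimage, mem_Iic, sub_nonpos]
    exact and_congr_right fun hd => ⟨fun h => h.ge, (le_Ustar hU hd).antisymm⟩
  rw [hPhi]
  have hgap : LowerSemicontinuous
      fun q : (Θ × CL C) × C => Ustar U q.1.1 q.1.2 - U (q.1.1, q.2) :=
    ((lowerSemicontinuous_Ustar hU).comp continuous_fst).add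
      (hU.comp (continuous_fst.fst.prodMk continuous_snd)).neg.lowerSemicontinuous
  exact (CL.isClosed_setOf_mem.preimage (continuous_fst.snd.prodMk continuous_snd)).inter
    (hgap.isClosed_preimage 0)

theorem upperSemicontinuous_Vstar (hU : Continuous U) (hV : UpperSemicontinuous V) :
    UpperSemicontinuous fun p : Θ × CL C => Vstar U V p.1 p.2 :=
  (isClosed_setOf_mem_Phi hU).upperSemicontinuous_sSup_image
    (fun p => Phi_nonempty hU p.1 p.2) (f := fun q => V (q.1.1, q.2))
    (hV.comp (continuous_fst.fst.prodMk continuous_snd))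

end Menus

theorem add_sum_range_ite_mem_Ioc {a s Δ : ℝ} {n : ℕ} (hΔ : 0 < Δ) (has : a ≤ s)
    (hsn : s ≤ a + n * Δ) :
    a + ∑ i ∈ Finset.range n, (if a + (i + 1) * Δ ≤ s then Δ else 0) ∈
      Ioc (s - Δ) s := by
  have hq : 0 ≤ (s - a) / Δ := div_nonneg (sub_nonneg.2 has) hΔ.le
  have hcount : (Finset.range n).filter (fun i : ℕ => a + (i + 1) * Δ ≤ s) =
      Finset.range ⌊(s - a) / Δ⌋₊ := by
    have hfloor : ⌊(s - a) / Δ⌋₊ ≤ n :=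
      Nat.floor_le_of_le ((div_le_iff₀ hΔ).2 (by linarith))
    ext i
    have hlevel : a + (i + 1) * Δ ≤ s ↔ i < ⌊(s - a) / Δ⌋₊ := by
      rw [Nat.lt_iff_add_one_le, Nat.le_floor_iff hq, le_div_iff₀ hΔ]
      push_cast
      constructor <;> intro h <;> linarith
    rw [Finset.mem_filter, Finset.mem_range, Finset.mem_range, hlevel]
    exact ⟨fun h => h.2, fun h => ⟨h.trans_le hfloor, h⟩⟩
  rw [← Finset.sum_filter, hcount, Finset.sum_const, Finset.card_range, nsmul_eq_mul]
  have hfl := Nat.floor_le hq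
  have hlt := Nat.lt_floor_add_one ((s - a) / Δ)
  rw [le_div_iff₀ hΔ] at hfl
  rw [div_lt_iff₀ hΔ] at hlt
  constructor <;> nlinarith

section Integrals

variable {Θ : Type*} [MeasurableSpace Θ] (κ : Measure Θ) [IsFiniteMeasure κ]

theorem integral_mem_Icc_sum_measureReal_superlevel {g : Θ → ℝ} (hg : Measurable g)
    {a Δ : ℝ} {n : ℕ} (hΔ : 0 < Δ) (hga : ∀ θ, a ≤ g θ)
    (hgn : ∀ θ, g θ ≤ a + n * Δ) :
    ∫ θ, g θ ∂κ ∈ Icc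
      (κ.real univ * a + Δ * ∑ i ∈ Finset.range n, κ.real {θ | a + (i + 1) * Δ ≤ g θ})
      (κ.real univ * (a + Δ) +
        Δ * ∑ i ∈ Finset.range n, κ.real {θ | a + (i + 1) * Δ ≤ g θ}) := by
  have hlevel : ∀ i : ℕ, MeasurableSet {θ | a + (i + 1) * Δ ≤ g θ} :=
    fun i => measurableSet_le measurable_const hg
  set step : Θ → ℝ := fun θ => ∑ i ∈ Finset.range n,
    {θ | a + (i + 1) * Δ ≤ g θ}.indicator (fun _ => Δ) θ
  have hstep_int : Integrable step κ :=
    integrable_finsetSum _ fun i _ => (integrable_const Δ).indicator (hlevel i)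
  have hstep : ∀ θ, a + step θ ∈ Ioc (g θ - Δ) (g θ) := by
    intro θ
    simp only [step, indicator_apply, mem_ofPred_eq]
    exact add_sum_range_ite_mem_Ioc hΔ (hga θ) (hgn θ)
  have hint_step : ∫ θ, a + step θ ∂κ = κ.real univ * a +
      Δ * ∑ i ∈ Finset.range n, κ.real {θ | a + (i + 1) * Δ ≤ g θ} := by
    rw [integral_add (integrable_const a) hstep_int, integral_const, smul_eq_mul,
      integral_finsetSum _ fun i _ => (integrable_const Δ).indicator (hlevel i),
      Finset.mul_sum]
    congr 1
    refine Finset.sum_congr rfl fun i _ => ?_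
    rw [integral_indicator_const _ (hlevel i), smul_eq_mul, mul_comm]
  have hg_int : Integrable g κ :=
    Integrable.of_bound hg.aestronglyMeasurable (max |a| |a + n * Δ|)
      (ae_of_all _ fun θ => abs_le_max_abs_abs (hga θ) (hgn θ))
  constructor
  · rw [← hint_step]
    exact integral_mono ((integrable_const a).add hstep_int) hg_int fun θ => (hstep θ).2
  · have h := integral_mono (f := fun θ => g θ - Δ) (g := fun θ => a + step θ)
      (hg_int.sub (integrable_const Δ)) ((integrable_const a).add hstep_int)
      fun θ => (hstep θ).1.le
    rw [integral_sub hg_int (integrable_const Δ), integral_const, smul_eq_mul, hint_step] at h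
    linarith

end Integrals

section LevelSets

variable {Θ X : Type*} [TopologicalSpace Θ] [T2Space Θ] [MeasurableSpace Θ]
  [OpensMeasurableSpace Θ] [TopologicalSpace X] (κ : Measure Θ) [IsFiniteMeasure κ]
  [κ.InnerRegularCompactLTTop] [κ.OuterRegular]

theorem IsClosed.upperSemicontinuous_measure_preimage_prodMk {S : Set (X × Θ)}
    (hS : IsClosed S) : UpperSemicontinuous fun x => κ (Prod.mk x ⁻¹' S) := by
  intro x₀ y hy
  obtain ⟨O, hSO, hO, hOy⟩ := Set.exists_isOpen_lt_of_lt _ y hy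
  obtain ⟨K, -, hK, hKO⟩ := MeasurableSet.univ.exists_isCompact_sdiff_lt
    (measure_ne_top κ univ) (tsub_pos_of_lt hOy).ne'
  have htube : ∀ᶠ x in 𝓝 x₀, ∀ θ ∈ K \ O, (x, θ) ∉ S :=
    (hK.diff hO).eventually_forall_of_forall_eventually fun θ hθ =>
      hS.isOpen_compl.mem_nhds fun h => hθ.2 (hSO h)
  filter_upwards [htube] with x hx
  calc κ (Prod.mk x ⁻¹' S) ≤ κ (O ∪ univ \ K) :=
        measure_mono fun θ hθ => by by_contra h; simp_all
    _ ≤ κ O + κ (univ \ K) := measure_union_le _ _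
    _ < κ O + (y - κ O) := ENNReal.add_lt_add_left (measure_ne_top κ O) hKO
    _ = y := add_tsub_cancel_of_le hOy.le

theorem IsClosed.upperSemicontinuous_measureReal_preimage_prodMk {S : Set (X × Θ)}
    (hS : IsClosed S) : UpperSemicontinuous fun x => κ.real (Prod.mk x ⁻¹' S) := by
  intro x₀ y hy
  filter_upwards [hS.upperSemicontinuous_measure_preimage_prodMk κ x₀ (ENNReal.ofReal y)
    ((ENNReal.lt_ofReal_iff_toReal_lt (measure_ne_top _ _)).2 hy)] with x hx
  exact (ENNReal.lt_ofReal_iff_toReal_lt (measure_ne_top _ _)).1 hx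

theorem upperSemicontinuous_parametric_integral_of_upperSemicontinuous {f : X × Θ → ℝ}
    (hf : UpperSemicontinuous f) {M : ℝ} (hM : ∀ p, |f p| ≤ M) :
    UpperSemicontinuous fun x => ∫ θ, f (x, θ) ∂κ := by
  intro x₀ y hy
  -- The discretization errors `Δ * κ.real univ` and `Δ` add up to `y - ∫ f (x₀, ·)`.
  set Δ := (y - ∫ θ, f (x₀, θ) ∂κ) / (κ.real univ + 1)
  have hΔ : 0 < Δ := div_pos (sub_pos.2 hy) (by positivity)
  set n := ⌈2 * M / Δ⌉₊
  set L : X → ℝ := fun x =>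
    ∑ i ∈ Finset.range n, κ.real {θ | -M + (i + 1) * Δ ≤ f (x, θ)}
  have hbounds : ∀ x, ∫ θ, f (x, θ) ∂κ ∈
      Icc (κ.real univ * -M + Δ * L x) (κ.real univ * (-M + Δ) + Δ * L x) := by
    have hnΔ : 2 * M ≤ n * Δ := (div_le_iff₀ hΔ).1 (Nat.le_ceil _)
    exact fun x => integral_mem_Icc_sum_measureReal_superlevel κ (g := fun θ => f (x, θ))
      (hf.comp (Continuous.prodMk_right x)).measurable hΔ
      (fun θ => neg_le_of_abs_le (hM _)) (fun θ => by linarith [le_of_abs_le (hM (x, θ))])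
  have hL : UpperSemicontinuous L := upperSemicontinuous_sum fun i _ =>
    (hf.isClosed_preimage _).upperSemicontinuous_measureReal_preimage_prodMk κ
  filter_upwards [hL x₀ (L x₀ + 1) (lt_add_one _)] with x hx
  calc ∫ θ, f (x, θ) ∂κ ≤ κ.real univ * (-M + Δ) + Δ * L x := (hbounds x).2
    _ < κ.real univ * (-M + Δ) + Δ * (L x₀ + 1) := by gcongr
    _ ≤ ∫ θ, f (x₀, θ) ∂κ + Δ * (κ.real univ + 1) := by linarith [(hbounds x₀).1]
    _ = y := by rw [div_mul_cancel₀ _ (by positivity)]; ring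

end LevelSets

theorem upperSemicontinuous_integral_Vstar {Θ C : Type*} [TopologicalSpace C] [CompactSpace C]
    [T2Space C] [TopologicalSpace Θ] [T2Space Θ] [MeasurableSpace Θ] [OpensMeasurableSpace Θ]
    {U V : Θ × C → ℝ} (hU : Continuous U) (hV : UpperSemicontinuous V) {M : ℝ}
    (hM : ∀ p, |V p| ≤ M) (κ : Measure Θ) [IsFiniteMeasure κ] [κ.InnerRegularCompactLTTop]
    [κ.OuterRegular] : UpperSemicontinuous fun D : CL C => ∫ θ, Vstar U V θ D ∂κ :=
  upperSemicontinuous_parametric_integral_of_upperSemicontinuous κ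
    ((upperSemicontinuous_Vstar hU hV).comp continuous_swap) fun p => abs_Vstar_le hU hM p.2 p.1

open MeasureTheory in
theorem exists_optimal_menu_of_bounded_general {Θ C : Type*}
    [TopologicalSpace C] [CompactSpace C] [T2Space C]
    [TopologicalSpace Θ] [T2Space Θ]
    [MeasurableSpace Θ] [BorelSpace Θ]
    (U V : Θ × C → ℝ) (hU : Continuous U) (hV : UpperSemicontinuous V)
    (hVbdd : ∃ M : ℝ, ∀ p : Θ × C, |V p| ≤ M)
    (ulow : Θ → ℝ) (hIR : ∃ cstar : C, ∀ θ : Θ, ulow θ ≤ U (θ, cstar))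
    (𝕂 : Set (Measure Θ))
    (h𝕂 : ∀ κ ∈ 𝕂, IsProbabilityMeasure κ ∧ κ.InnerRegular ∧ κ.OuterRegular)
    (α : Measure Θ → ℝ) :
    ∃ Dstar ∈ menusIR U ulow, ∀ D ∈ menusIR U ulow,
      (⨅ κ ∈ 𝕂, (((∫ θ, Vstar U V θ D ∂κ) + α κ : ℝ) : EReal)) ≤
        ⨅ κ ∈ 𝕂, (((∫ θ, Vstar U V θ Dstar ∂κ) + α κ : ℝ) : EReal) := by
  obtain ⟨M, hM⟩ := hVbdd
  obtain ⟨cstar, hcstar⟩ := hIR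
  have hT : (menusIR U ulow).Nonempty :=
    ⟨⟨univ, ⟨cstar, mem_univ cstar⟩, isClosed_univ⟩,
      fun θ => (hcstar θ).trans (le_Ustar hU (mem_univ cstar))⟩
  have hobjective : UpperSemicontinuous fun D : CL C =>
      ⨅ κ ∈ 𝕂, (((∫ θ, Vstar U V θ D ∂κ) + α κ : ℝ) : EReal) :=
    upperSemicontinuous_biInf fun κ hκ => by
      obtain ⟨_, _, _⟩ := h𝕂 κ hκ
      exact continuous_coe_real_ereal.comp_upperSemicontinuous
        ((upperSemicontinuous_integral_Vstar hU hV hM κ).add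
          continuous_const.upperSemicontinuous) fun _ _ => EReal.coe_le_coe
  obtain ⟨Dstar, hDstar, hmax⟩ := (hobjective.upperSemicontinuousOn _).exists_isMaxOn hT
    (isClosed_menusIR hU ulow).isCompact
  exact ⟨Dstar, hDstar, fun D hD => hmax hD⟩

open MeasureTheory in
/-- Existence of an optimal menu with a non-compact type space (Proposition 5 of the
paper): if `C` is compact Hausdorff, `Θ` is Hausdorff (not necessarily compact), `U` is
jointly continuous, `V` is jointly upper semicontinuous and uniformly bounded, some
contract is individually rational, `𝕂` is a nonempty set of regular Borel probability
measures on `Θ` and `α : 𝕂 → ℝ` is a penalty, then the principal's problem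
`sup_{D ∈ T} inf_{κ ∈ 𝕂} { ∫ V*(θ, D) dκ + α(κ) }` admits a maximizer `D* ∈ T`. -/
theorem exists_optimal_menu_of_bounded {Θ C : Type*}
    [TopologicalSpace C] [CompactSpace C] [T2Space C]
    [TopologicalSpace Θ] [T2Space Θ]
    [MeasurableSpace Θ] [BorelSpace Θ]
    (U V : Θ × C → ℝ) (hU : Continuous U) (hV : UpperSemicontinuous V)
    (hVbdd : ∃ M : ℝ, ∀ p : Θ × C, |V p| ≤ M)
    (ulow : Θ → ℝ) (hIR : ∃ cstar : C, ∀ θ : Θ, ulow θ ≤ U (θ, cstar))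
    (𝕂 : Set (Measure Θ)) (h𝕂ne : 𝕂.Nonempty)
    (h𝕂 : ∀ κ ∈ 𝕂, IsProbabilityMeasure κ ∧ κ.InnerRegular ∧ κ.OuterRegular)
    (α : Measure Θ → ℝ) :
    ∃ Dstar ∈ menusIR U ulow, ∀ D ∈ menusIR U ulow,
      (⨅ κ ∈ 𝕂, (((∫ θ, Vstar U V θ D ∂κ) + α κ : ℝ) : EReal)) ≤
        ⨅ κ ∈ 𝕂, (((∫ θ, Vstar U V θ Dstar ∂κ) + α κ : ℝ) : EReal) :=
  exists_optimal_menu_of_bounded_general U V hU hV hVbdd ulow hIR 𝕂 h𝕂 α
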